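/- Let 0 < l₁ < L, let c₂, ρ, α, β, γ, μ be positive reals with α₁ := α − γ²β > 0, and let d₁ : ℝ → ℝ be continuous and nonnegative on [l₁, L]. Suppose v, p : ℝ × ℝ → ℂ are twice continuously differentiable on [0,l₁]×[0,∞) and y : ℝ × ℝ → ℂ is twice continuously differentiable on [l₁,L]×[0,∞), satisfying for all t ≥ 0: ρ v_tt − α v_xx + γβ p_xx = 0 and μ p_tt − β p_xx + γβ v_xx = 0 on [0,l₁]; y_tt − c₂ y_xx + d₁(x) y_t = 0 on [l₁,L]; the boundary conditions v(0,t)=p(0,t)=0, y(L,t)=0; the continuity condition v(l₁,t)=y(l₁,t); and the transmission conditions α v_x(l₁,t) − γβ p_x(l₁,t) = c₂ y_x(l₁,t) and p_x(l₁,t) = γ v_x(l₁,t). Define E(t) = (1/2)∫₀^{l₁}(ρ|v_t|² + α₁|v_x|² + μ|p_t|² + β|γ v_x − p_x|²)dx + (1/2)∫_{l₁}^{L}(|y_t|² + c₂|y_x|²)dx. Then for every t > 0, E is differentiable at t and E′(t) = −∫_{l₁}^{L} d₁(x) |y_t(x,t)|² dx. -/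

import Mathlib

/-!
Differentiate each energy integral under the integral sign. By the equations of motion, and
the symmetry of mixed partials `∂ₓ∂ₜ = ∂ₜ∂ₓ`, the time derivative of each energy density is the
`x`-derivative of a power flux (on the elastic part, up to the damping term `2 d₁ |y_t|²`), so
each energy changes by its boundary fluxes. The fluxes vanish at `x = 0` and `x = L` by the
boundary conditions, and the continuity and transmission conditions make the two fluxes at
`x = l₁` equal.
-/

open Set

/-- `f : (x, t) ↦ f x t` is twice continuously differentiable on
`[a, b] × [0, ∞)`, with partial derivatives `fx, ft, fxx, ftt, fxt`. -/
def IsC2On (f fx ft fxx ftt fxt : ℝ → ℝ → ℂ) (a b : ℝ) : Prop :=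
  (∀ x ∈ Set.Icc a b, ∀ t ∈ Set.Ici (0 : ℝ),
      HasDerivAt (fun s => f s t) (fx x t) x ∧
      HasDerivAt (fun s => f x s) (ft x t) t ∧
      HasDerivAt (fun s => fx s t) (fxx x t) x ∧
      HasDerivAt (fun s => ft x s) (ftt x t) t ∧
      HasDerivAt (fun s => fx x s) (fxt x t) t) ∧
  ContinuousOn (fun q : ℝ × ℝ => f q.1 q.2) (Set.Icc a b ×ˢ Set.Ici 0) ∧
  ContinuousOn (fun q : ℝ × ℝ => fx q.1 q.2) (Set.Icc a b ×ˢ Set.Ici 0) ∧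
  ContinuousOn (fun q : ℝ × ℝ => ft q.1 q.2) (Set.Icc a b ×ˢ Set.Ici 0) ∧
  ContinuousOn (fun q : ℝ × ℝ => fxx q.1 q.2) (Set.Icc a b ×ˢ Set.Ici 0) ∧
  ContinuousOn (fun q : ℝ × ℝ => ftt q.1 q.2) (Set.Icc a b ×ˢ Set.Ici 0) ∧
  ContinuousOn (fun q : ℝ × ℝ => fxt q.1 q.2) (Set.Icc a b ×ˢ Set.Ici 0)

open Filter MeasureTheory intervalIntegral
open scoped InnerProductSpace

section

variable {E : Type*} [NormedAddCommGroup E] [NormedSpace ℝ E]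

theorem hasDerivAt_intervalIntegral_of_continuousOn {F F' : ℝ → ℝ → E} {a b t : ℝ}
    (hab : a ≤ b) (ht : 0 < t)
    (hF : ContinuousOn (fun q : ℝ × ℝ => F q.1 q.2) (Icc a b ×ˢ Ici 0))
    (hF' : ContinuousOn (fun q : ℝ × ℝ => F' q.1 q.2) (Icc a b ×ˢ Ici 0))
    (hd : ∀ x ∈ Icc a b, ∀ s ∈ Ici (0 : ℝ), HasDerivAt (F x) (F' x s) s) :
    HasDerivAt (fun s => ∫ x in a..b, F x s) (∫ x in a..b, F' x t) t := by
  have hK : Metric.closedBall t (t / 2) ⊆ Ici 0 := fun s hs => by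
    rw [Real.closedBall_eq_Icc] at hs
    exact le_trans (by linarith) hs.1
  obtain ⟨M, hM⟩ := IsCompact.exists_bound_of_continuousOn
    (isCompact_Icc.prod (isCompact_closedBall t (t / 2))) (hF'.mono (prod_mono_right hK))
  have hIoc : uIoc a b ⊆ Icc a b := by
    rw [uIoc_of_le hab]; exact Ioc_subset_Icc_self
  have hIcc : uIcc a b = Icc a b := uIcc_of_le hab
  exact (hasDerivAt_integral_of_dominated_loc_of_deriv_le (F := fun s x => F x s)
    (bound := fun _ => M)
    (Metric.ball_mem_nhds t (half_pos ht))
    (eventually_of_mem (Ioi_mem_nhds ht) fun s hs =>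
      ((hF.uncurry_right _ (le_of_lt hs)).mono hIoc).aestronglyMeasurable measurableSet_uIoc)
    ((hF.uncurry_right _ ht.le).mono hIcc.subset).intervalIntegrable
    (((hF'.uncurry_right _ ht.le).mono hIoc).aestronglyMeasurable measurableSet_uIoc)
    (ae_of_all _ fun x hx s hs => hM (x, s) ⟨hIoc hx, Metric.ball_subset_closedBall hs⟩)
    intervalIntegrable_const
    (ae_of_all _ fun x hx s hs => hd x (hIoc hx) s (hK (Metric.ball_subset_closedBall hs)))).2

variable [CompleteSpace E]

theorem sub_eq_intervalIntegral_of_mixed_partial {f fx ft fxt : ℝ → ℝ → E} {a b t : ℝ}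
    (ht : 0 < t)
    (hfx : ∀ x ∈ Icc a b, ∀ s ∈ Ici (0 : ℝ), HasDerivAt (f · s) (fx x s) x)
    (hft : ∀ x ∈ Icc a b, HasDerivAt (f x) (ft x t) t)
    (hfxt : ∀ x ∈ Icc a b, ∀ s ∈ Ici (0 : ℝ), HasDerivAt (fx x) (fxt x s) s)
    (hcx : ContinuousOn (fun q : ℝ × ℝ => fx q.1 q.2) (Icc a b ×ˢ Ici 0))
    (hcxt : ContinuousOn (fun q : ℝ × ℝ => fxt q.1 q.2) (Icc a b ×ˢ Ici 0))
    {u : ℝ} (hu : u ∈ Icc a b) :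
    ft u t - ft a t = ∫ ξ in a..u, fxt ξ t := by
  have hsub : Icc a u ⊆ Icc a b := Icc_subset_Icc le_rfl hu.2
  have hIcc : uIcc a u = Icc a u := uIcc_of_le hu.1
  have hint : HasDerivAt (fun s => ∫ ξ in a..u, fx ξ s) (∫ ξ in a..u, fxt ξ t) t :=
    hasDerivAt_intervalIntegral_of_continuousOn hu.1 ht (hcx.mono (prod_mono_left hsub))
      (hcxt.mono (prod_mono_left hsub)) fun ξ hξ => hfxt ξ (hsub hξ)
  have hftc : ∀ s ∈ Ici (0 : ℝ), ∫ ξ in a..u, fx ξ s = f u s - f a s := fun s hs =>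
    integral_eq_sub_of_hasDerivAt (fun ξ hξ => hfx ξ (hsub (hIcc ▸ hξ)) s hs)
      ((hcx.uncurry_right _ hs).mono (hIcc ▸ hsub)).intervalIntegrable
  refine ((hft u hu).sub (hft a (left_mem_Icc.2 (hu.1.trans hu.2)))).unique
    (hint.congr_of_eventuallyEq ?_)
  filter_upwards [Ici_mem_nhds ht] with s hs
  exact (hftc s hs).symm

theorem hasDerivAt_of_mixed_partial {f fx ft fxt : ℝ → ℝ → E} {a b x t : ℝ}
    (hfx : ∀ x ∈ Icc a b, ∀ s ∈ Ici (0 : ℝ), HasDerivAt (f · s) (fx x s) x)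
    (hft : ∀ x ∈ Icc a b, HasDerivAt (f x) (ft x t) t)
    (hfxt : ∀ x ∈ Icc a b, ∀ s ∈ Ici (0 : ℝ), HasDerivAt (fx x) (fxt x s) s)
    (hcx : ContinuousOn (fun q : ℝ × ℝ => fx q.1 q.2) (Icc a b ×ˢ Ici 0))
    (hcxt : ContinuousOn (fun q : ℝ × ℝ => fxt q.1 q.2) (Icc a b ×ˢ Ici 0))
    (hx : x ∈ Ioo a b) (ht : 0 < t) :
    HasDerivAt (ft · t) (fxt x t) x := by
  have hcont : ContinuousOn (fxt · t) (Icc a b) := hcxt.uncurry_right _ ht.le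
  have hprim : HasDerivAt (fun u => ft a t + ∫ ξ in a..u, fxt ξ t) (fxt x t) x :=
    (integral_hasDerivAt_right
      ((hcont.mono (uIcc_subset_Icc (left_mem_Icc.2 (hx.1.le.trans hx.2.le))
        (Ioo_subset_Icc_self hx))).intervalIntegrable)
      ((hcont.mono Ioo_subset_Icc_self).stronglyMeasurableAtFilter isOpen_Ioo x hx)
      (hcont.continuousAt (Icc_mem_nhds hx.1 hx.2))).const_add _
  refine hprim.congr_of_eventuallyEq ?_
  filter_upwards [Ioo_mem_nhds hx.1 hx.2] with u hu
  rw [← sub_eq_intervalIntegral_of_mixed_partial ht hfx hft hfxt hcx hcxt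
    (Ioo_subset_Icc_self hu), add_sub_cancel]

theorem hasDerivAt_intervalIntegral_eq_sub_of_flux {e e' : ℝ → ℝ → ℝ} {Φ g : ℝ → ℝ}
    {a b t : ℝ} (hab : a ≤ b) (ht : 0 < t)
    (he : ContinuousOn (fun q : ℝ × ℝ => e q.1 q.2) (Icc a b ×ˢ Ici 0))
    (he' : ContinuousOn (fun q : ℝ × ℝ => e' q.1 q.2) (Icc a b ×ˢ Ici 0))
    (hdt : ∀ x ∈ Icc a b, ∀ s ∈ Ici (0 : ℝ), HasDerivAt (e x) (e' x s) s)
    (hΦ : ContinuousOn Φ (Icc a b)) (hg : IntervalIntegrable g volume a b)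
    (hdx : ∀ x ∈ Ioo a b, HasDerivAt Φ (e' x t + g x) x) :
    HasDerivAt (fun s => ∫ x in a..b, e x s) (Φ b - Φ a - ∫ x in a..b, g x) t := by
  have he't : IntervalIntegrable (e' · t) volume a b :=
    ((he'.uncurry_right _ ht.le).mono (uIcc_of_le hab).subset).intervalIntegrable
  have hftc := integral_eq_sub_of_hasDerivAt_of_le hab hΦ hdx (he't.add hg)
  rw [integral_add he't hg] at hftc
  rw [← hftc, add_sub_cancel_right]
  exact hasDerivAt_intervalIntegral_of_continuousOn hab ht he he' hdt

end

namespace IsC2On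

variable {f fx ft fxx ftt fxt : ℝ → ℝ → ℂ} {a b x t : ℝ}

theorem hasDerivAt_ft_x (hf : IsC2On f fx ft fxx ftt fxt a b) (hx : x ∈ Ioo a b)
    (ht : 0 < t) : HasDerivAt (ft · t) (fxt x t) x :=
  hasDerivAt_of_mixed_partial (fun x hx s hs => (hf.1 x hx s hs).1)
    (fun x hx => (hf.1 x hx t ht.le).2.1) (fun x hx s hs => (hf.1 x hx s hs).2.2.2.2)
    hf.2.2.1 hf.2.2.2.2.2.2 hx ht

theorem ft_eq_of_eqOn_Ici (hf : IsC2On f fx ft fxx ftt fxt a b) {g gx gt gxx gtt gxt : ℝ → ℝ → ℂ}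
    {c d x' : ℝ} (hg : IsC2On g gx gt gxx gtt gxt c d) (hx : x ∈ Icc a b) (hx' : x' ∈ Icc c d)
    (hfg : ∀ s ∈ Ici (0 : ℝ), f x s = g x' s) (ht : 0 < t) : ft x t = gt x' t :=
  (hf.1 x hx t ht.le).2.1.unique <|
    (hg.1 x' hx' t ht.le).2.1.congr_of_eventuallyEq (eventually_of_mem (Ici_mem_nhds ht) hfg)

theorem ft_eq_zero (hf : IsC2On f fx ft fxx ftt fxt a b) (hx : x ∈ Icc a b)
    (h0 : ∀ s ∈ Ici (0 : ℝ), f x s = 0) (ht : 0 < t) : ft x t = 0 :=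
  (hf.1 x hx t ht.le).2.1.unique <|
    (hasDerivAt_const t 0).congr_of_eventuallyEq (eventually_of_mem (Ici_mem_nhds ht) h0)

end IsC2On

noncomputable def piezoEnergyDensity (ρ α β γ μ : ℝ) (vt vx pt px : ℂ) : ℝ :=
  ρ * ‖vt‖ ^ 2 + (α - γ ^ 2 * β) * ‖vx‖ ^ 2 + μ * ‖pt‖ ^ 2 + β * ‖(γ : ℂ) * vx - px‖ ^ 2

noncomputable def piezoFlux (α β γ : ℝ) (vt vx pt px : ℂ) : ℝ :=
  ⟪vt, α * vx - (γ * β : ℝ) * px⟫_ℝ + ⟪pt, β * px - (γ * β : ℝ) * vx⟫_ℝ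

noncomputable def elasticEnergyDensity (c₂ : ℝ) (yt yx : ℂ) : ℝ := ‖yt‖ ^ 2 + c₂ * ‖yx‖ ^ 2

theorem HasDerivAt.piezoEnergyDensity {ρ α β γ μ s : ℝ} {vt vx pt px : ℝ → ℂ}
    {vt' vx' pt' px' : ℂ} (hvt : HasDerivAt vt vt' s) (hvx : HasDerivAt vx vx' s)
    (hpt : HasDerivAt pt pt' s) (hpx : HasDerivAt px px' s) :
    HasDerivAt (fun s => piezoEnergyDensity ρ α β γ μ (vt s) (vx s) (pt s) (px s))
      (2 * (ρ * ⟪vt s, vt'⟫_ℝ + (α - γ ^ 2 * β) * ⟪vx s, vx'⟫_ℝ + μ * ⟪pt s, pt'⟫_ℝ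
        + β * ⟪(γ : ℂ) * vx s - px s, (γ : ℂ) * vx' - px'⟫_ℝ)) s :=
  HasDerivAt.congr_deriv
    ((((hvt.norm_sq.const_mul ρ).add (hvx.norm_sq.const_mul (α - γ ^ 2 * β))).add
      (hpt.norm_sq.const_mul μ)).add (((hvx.const_mul (γ : ℂ)).sub hpx).norm_sq.const_mul β))
    (by simp only [Pi.sub_apply]; ring)

theorem hasDerivAt_piezoEnergy {l ρ α β γ μ t : ℝ} (hl : 0 ≤ l) (ht : 0 < t)
    {v vx vt vxx vtt vxt p px pt pxx ptt pxt : ℝ → ℝ → ℂ}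
    (hv : IsC2On v vx vt vxx vtt vxt 0 l) (hp : IsC2On p px pt pxx ptt pxt 0 l)
    (hveq : ∀ x ∈ Icc 0 l,
      (ρ : ℂ) * vtt x t - α * vxx x t + ((γ * β : ℝ) : ℂ) * pxx x t = 0)
    (hpeq : ∀ x ∈ Icc 0 l,
      (μ : ℂ) * ptt x t - β * pxx x t + ((γ * β : ℝ) : ℂ) * vxx x t = 0)
    (hv0 : ∀ s ∈ Ici (0 : ℝ), v 0 s = 0) (hp0 : ∀ s ∈ Ici (0 : ℝ), p 0 s = 0) :
    HasDerivAt
      (fun s => ∫ x in (0 : ℝ)..l,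
        piezoEnergyDensity ρ α β γ μ (vt x s) (vx x s) (pt x s) (px x s))
      (2 * piezoFlux α β γ (vt l t) (vx l t) (pt l t) (px l t)) t := by
  obtain ⟨hvd, -, hvxc, hvtc, -, hvttc, hvxtc⟩ := id hv
  obtain ⟨hpd, -, hpxc, hptc, -, hpttc, hpxtc⟩ := id hp
  have h0 : (0 : ℝ) ∈ Icc 0 l := left_mem_Icc.2 hl
  have hflux0 : piezoFlux α β γ (vt 0 t) (vx 0 t) (pt 0 t) (px 0 t) = 0 := by
    simp [piezoFlux, hv.ft_eq_zero h0 hv0 ht, hp.ft_eq_zero h0 hp0 ht]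
  convert hasDerivAt_intervalIntegral_eq_sub_of_flux (g := 0) hl ht
    (e' := fun x s => 2 * (ρ * ⟪vt x s, vtt x s⟫_ℝ + (α - γ ^ 2 * β) * ⟪vx x s, vxt x s⟫_ℝ
      + μ * ⟪pt x s, ptt x s⟫_ℝ
      + β * ⟪(γ : ℂ) * vx x s - px x s, (γ : ℂ) * vxt x s - pxt x s⟫_ℝ))
    (Φ := fun x => 2 * piezoFlux α β γ (vt x t) (vx x t) (pt x t) (px x t))
    ?_ ?_ ?_ ?_ intervalIntegrable_const ?_ using 1
  · simp [hflux0]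
  · simp only [piezoEnergyDensity]
    fun_prop
  · fun_prop
  · intro x hx s hs
    obtain ⟨-, -, -, hvtt, hvxt⟩ := hvd x hx s hs
    obtain ⟨-, -, -, hptt, hpxt⟩ := hpd x hx s hs
    exact hvtt.piezoEnergyDensity hvxt hptt hpxt
  · have := hvtc.uncurry_right _ ht.le
    have := hvxc.uncurry_right _ ht.le
    have := hptc.uncurry_right _ ht.le
    have := hpxc.uncurry_right _ ht.le
    simp only [piezoFlux]
    fun_prop
  · intro x hx
    have hxI : x ∈ Icc 0 l := Ioo_subset_Icc_self hx
    obtain ⟨-, -, hvxx, -, -⟩ := hvd x hxI t ht.le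
    obtain ⟨-, -, hpxx, -, -⟩ := hpd x hxI t ht.le
    have hvstress : (α : ℂ) * vxx x t - ((γ * β : ℝ) : ℂ) * pxx x t = ρ * vtt x t := by
      linear_combination -(hveq x hxI)
    have hpstress : (β : ℂ) * pxx x t - ((γ * β : ℝ) : ℂ) * vxx x t = μ * ptt x t := by
      linear_combination -(hpeq x hxI)
    have := ((HasDerivAt.inner ℝ (hv.hasDerivAt_ft_x hx ht)
      ((hvxx.const_mul (α : ℂ)).sub (hpxx.const_mul ((γ * β : ℝ) : ℂ)))).add
      (HasDerivAt.inner ℝ (hp.hasDerivAt_ft_x hx ht)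
      ((hpxx.const_mul (β : ℂ)).sub (hvxx.const_mul ((γ * β : ℝ) : ℂ))))).const_mul 2
    rw [hvstress, hpstress] at this
    refine this.congr_deriv ?_
    simp only [Pi.sub_apply, Complex.inner, Complex.mul_re, Complex.mul_im, Complex.sub_re,
      Complex.sub_im, Complex.conj_re, Complex.conj_im, Complex.ofReal_re, Complex.ofReal_im,
      Pi.zero_apply]
    ring

theorem hasDerivAt_elasticEnergy {l L c₂ t : ℝ} {d₁ : ℝ → ℝ} (hlL : l ≤ L) (ht : 0 < t)
    (hd₁ : ContinuousOn d₁ (Icc l L)) {y yx yt yxx ytt yxt : ℝ → ℝ → ℂ}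
    (hy : IsC2On y yx yt yxx ytt yxt l L)
    (hyeq : ∀ x ∈ Icc l L, ytt x t - (c₂ : ℂ) * yxx x t + (d₁ x : ℂ) * yt x t = 0)
    (hyL : ∀ s ∈ Ici (0 : ℝ), y L s = 0) :
    HasDerivAt (fun s => ∫ x in l..L, elasticEnergyDensity c₂ (yt x s) (yx x s))
      (-2 * (⟪yt l t, (c₂ : ℂ) * yx l t⟫_ℝ + ∫ x in l..L, d₁ x * ‖yt x t‖ ^ 2)) t := by
  obtain ⟨hyd, -, hyxc, hytc, -, hyttc, hyxtc⟩ := id hy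
  have hytL : yt L t = 0 := hy.ft_eq_zero (right_mem_Icc.2 hlL) hyL ht
  have hyt := hytc.uncurry_right _ ht.le
  have hyx := hyxc.uncurry_right _ ht.le
  convert hasDerivAt_intervalIntegral_eq_sub_of_flux hlL ht
    (e' := fun x s => 2 * (⟪yt x s, ytt x s⟫_ℝ + c₂ * ⟪yx x s, yxt x s⟫_ℝ))
    (Φ := fun x => 2 * ⟪yt x t, (c₂ : ℂ) * yx x t⟫_ℝ)
    (g := fun x => 2 * (d₁ x * ‖yt x t‖ ^ 2)) ?_ ?_ ?_ ?_ ?_ ?_ using 1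
  · simp only [hytL, inner_zero_left, intervalIntegral.integral_const_mul]
    ring
  · simp only [elasticEnergyDensity]
    fun_prop
  · fun_prop
  · intro x hx s hs
    obtain ⟨-, -, -, hytt, hyxt⟩ := hyd x hx s hs
    exact (hytt.norm_sq.add (hyxt.norm_sq.const_mul c₂)).congr_deriv (by ring)
  · fun_prop
  · exact ((uIcc_of_le hlL).symm ▸ (by fun_prop : ContinuousOn _ (Icc l L))).intervalIntegrable
  · intro x hx
    have hxI : x ∈ Icc l L := Ioo_subset_Icc_self hx
    obtain ⟨-, -, hyxx, -, -⟩ := hyd x hxI t ht.le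
    have hstress : (c₂ : ℂ) * yxx x t = ytt x t + d₁ x * yt x t := by
      linear_combination -(hyeq x hxI)
    have := ((HasDerivAt.inner ℝ (hy.hasDerivAt_ft_x hx ht) (hyxx.const_mul (c₂ : ℂ))).const_mul
      (2 : ℝ))
    rw [hstress] at this
    refine this.congr_deriv ?_
    simp only [Complex.inner, Complex.mul_re, Complex.mul_im, Complex.add_re, Complex.add_im,
      Complex.conj_re, Complex.conj_im, Complex.ofReal_re, Complex.ofReal_im, Complex.sq_norm,
      Complex.normSq_apply]
    ring

theorem stmt1_general (l₁ L c₂ ρ α β γ μ : ℝ)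
    (hl₁ : 0 < l₁) (hl₁L : l₁ < L)
    (d₁ : ℝ → ℝ) (hd₁c : ContinuousOn d₁ (Icc l₁ L))
    (v vx vt vxx vtt vxt : ℝ → ℝ → ℂ)
    (p px pt pxx ptt pxt : ℝ → ℝ → ℂ)
    (y yx yt yxx ytt yxt : ℝ → ℝ → ℂ)
    (hv : IsC2On v vx vt vxx vtt vxt 0 l₁)
    (hp : IsC2On p px pt pxx ptt pxt 0 l₁)
    (hy : IsC2On y yx yt yxx ytt yxt l₁ L)
    -- the three PDEs
    (hveq : ∀ t ∈ Ici (0 : ℝ), ∀ x ∈ Icc (0 : ℝ) l₁,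
      (ρ : ℂ) * vtt x t - (α : ℂ) * vxx x t + ((γ * β : ℝ) : ℂ) * pxx x t = 0)
    (hpeq : ∀ t ∈ Ici (0 : ℝ), ∀ x ∈ Icc (0 : ℝ) l₁,
      (μ : ℂ) * ptt x t - (β : ℂ) * pxx x t + ((γ * β : ℝ) : ℂ) * vxx x t = 0)
    (hyeq : ∀ t ∈ Ici (0 : ℝ), ∀ x ∈ Icc l₁ L,
      ytt x t - (c₂ : ℂ) * yxx x t + (d₁ x : ℂ) * yt x t = 0)
    -- boundary conditions
    (hbc0v : ∀ t ∈ Ici (0 : ℝ), v 0 t = 0)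
    (hbc0p : ∀ t ∈ Ici (0 : ℝ), p 0 t = 0)
    (hbcL : ∀ t ∈ Ici (0 : ℝ), y L t = 0)
    -- continuity condition
    (hct : ∀ t ∈ Ici (0 : ℝ), v l₁ t = y l₁ t)
    -- transmission conditions
    (htr1 : ∀ t ∈ Ici (0 : ℝ),
      (α : ℂ) * vx l₁ t - ((γ * β : ℝ) : ℂ) * px l₁ t = (c₂ : ℂ) * yx l₁ t)
    (htr2 : ∀ t ∈ Ici (0 : ℝ), px l₁ t = (γ : ℂ) * vx l₁ t) :
    ∀ t > (0 : ℝ), HasDerivAt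
      (fun s : ℝ =>
        (1 / 2) * (∫ x in (0 : ℝ)..l₁,
          (ρ * ‖vt x s‖ ^ 2 + (α - γ ^ 2 * β) * ‖vx x s‖ ^ 2 +
            μ * ‖pt x s‖ ^ 2 + β * ‖(γ : ℂ) * vx x s - px x s‖ ^ 2)) +
        (1 / 2) * (∫ x in l₁..L, (‖yt x s‖ ^ 2 + c₂ * ‖yx x s‖ ^ 2)))
      (-(∫ x in l₁..L, d₁ x * ‖yt x t‖ ^ 2)) t := by
  intro t ht
  have hpiezo := hasDerivAt_piezoEnergy hl₁.le ht hv hp (hveq t ht.le) (hpeq t ht.le)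
    hbc0v hbc0p
  have helastic := hasDerivAt_elasticEnergy hl₁L.le ht hd₁c hy (hyeq t ht.le) hbcL
  have hvt : vt l₁ t = yt l₁ t :=
    hv.ft_eq_of_eqOn_Ici hy (right_mem_Icc.2 hl₁.le) (left_mem_Icc.2 hl₁L.le) hct ht
  have hpx : (β : ℂ) * px l₁ t - ((γ * β : ℝ) : ℂ) * vx l₁ t = 0 := by
    rw [htr2 t ht.le]
    push_cast
    ring
  have hflux : piezoFlux α β γ (vt l₁ t) (vx l₁ t) (pt l₁ t) (px l₁ t) =
      ⟪yt l₁ t, (c₂ : ℂ) * yx l₁ t⟫_ℝ := by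
    rw [piezoFlux, htr1 t ht.le, hpx, inner_zero_right, add_zero, hvt]
  rw [hflux] at hpiezo
  exact ((hpiezo.const_mul (1 / 2 : ℝ)).add (helastic.const_mul (1 / 2 : ℝ))).congr_deriv
    (by ring)

/-- Energy dissipation identity for the serially-connected
Piezoelectric–Elastic transmission system with a local viscous damping `d₁`
acting only on the elastic part:
`E'(t) = -∫_{l₁}^{L} d₁(x) |y_t(x,t)|² dx` for every `t > 0`. -/
theorem stmt1 (l₁ L c₂ ρ α β γ μ : ℝ)
    (hl₁ : 0 < l₁) (hl₁L : l₁ < L)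
    (hc₂ : 0 < c₂) (hρ : 0 < ρ) (hα : 0 < α) (hβ : 0 < β)
    (hγ : 0 < γ) (hμ : 0 < μ) (hα₁ : 0 < α - γ ^ 2 * β)
    (d₁ : ℝ → ℝ) (hd₁c : ContinuousOn d₁ (Icc l₁ L))
    (hd₁0 : ∀ x ∈ Icc l₁ L, 0 ≤ d₁ x)
    (v vx vt vxx vtt vxt : ℝ → ℝ → ℂ)
    (p px pt pxx ptt pxt : ℝ → ℝ → ℂ)
    (y yx yt yxx ytt yxt : ℝ → ℝ → ℂ)
    (hv : IsC2On v vx vt vxx vtt vxt 0 l₁)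
    (hp : IsC2On p px pt pxx ptt pxt 0 l₁)
    (hy : IsC2On y yx yt yxx ytt yxt l₁ L)
    -- the three PDEs
    (hveq : ∀ t ∈ Ici (0 : ℝ), ∀ x ∈ Icc (0 : ℝ) l₁,
      (ρ : ℂ) * vtt x t - (α : ℂ) * vxx x t + ((γ * β : ℝ) : ℂ) * pxx x t = 0)
    (hpeq : ∀ t ∈ Ici (0 : ℝ), ∀ x ∈ Icc (0 : ℝ) l₁,
      (μ : ℂ) * ptt x t - (β : ℂ) * pxx x t + ((γ * β : ℝ) : ℂ) * vxx x t = 0)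
    (hyeq : ∀ t ∈ Ici (0 : ℝ), ∀ x ∈ Icc l₁ L,
      ytt x t - (c₂ : ℂ) * yxx x t + (d₁ x : ℂ) * yt x t = 0)
    -- boundary conditions
    (hbc0v : ∀ t ∈ Ici (0 : ℝ), v 0 t = 0)
    (hbc0p : ∀ t ∈ Ici (0 : ℝ), p 0 t = 0)
    (hbcL : ∀ t ∈ Ici (0 : ℝ), y L t = 0)
    -- continuity condition
    (hct : ∀ t ∈ Ici (0 : ℝ), v l₁ t = y l₁ t)
    -- transmission conditions
    (htr1 : ∀ t ∈ Ici (0 : ℝ),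
      (α : ℂ) * vx l₁ t - ((γ * β : ℝ) : ℂ) * px l₁ t = (c₂ : ℂ) * yx l₁ t)
    (htr2 : ∀ t ∈ Ici (0 : ℝ), px l₁ t = (γ : ℂ) * vx l₁ t) :
    ∀ t > (0 : ℝ), HasDerivAt
      (fun s : ℝ =>
        (1 / 2) * (∫ x in (0 : ℝ)..l₁,
          (ρ * ‖vt x s‖ ^ 2 + (α - γ ^ 2 * β) * ‖vx x s‖ ^ 2 +
            μ * ‖pt x s‖ ^ 2 + β * ‖(γ : ℂ) * vx x s - px x s‖ ^ 2)) +
        (1 / 2) * (∫ x in l₁..L, (‖yt x s‖ ^ 2 + c₂ * ‖yx x s‖ ^ 2)))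
      (-(∫ x in l₁..L, d₁ x * ‖yt x t‖ ^ 2)) t :=
  stmt1_general l₁ L c₂ ρ α β γ μ hl₁ hl₁L d₁ hd₁c v vx vt vxx vtt vxt p px pt pxx ptt pxt y yx yt
    yxx ytt yxt hv hp hy hveq hpeq hyeq hbc0v hbc0p hbcL hct htr1 htr2
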